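/- Let φ : [0,∞) → ℝ be continuous with positive bounds, Φ(s) = ∫₀^s φ(τ)dτ, and suppose s ↦ Φ(s²) is strictly convex on ℝ. Define β : ℝ^{N+1} → ℝ^{N+1} by β(η) = φ(|η|²/2)·η. Then β is strictly monotone: for all η ≠ η₁ in ℝ^{N+1}, ⟨β(η) − β(η₁), η − η₁⟩ > 0. -/

import Mathlib

/-!
With `G(s) = Φ(s²/2)`, strict convexity of `Φ(s²)` transfers to `G`, whose derivative is
`s φ(s²/2)` for `s ≠ 0`. A strictly convex function has a strictly increasing derivative, and
since `G` is even this extends to `s = 0`; so `r ↦ r φ(r²/2)` is strictly increasing on `[0, ∞)`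
and `φ(r²/2) > 0` for `r > 0`. Writing `a = ‖η‖`, `b = ‖η₁‖`, `A = φ(a²/2)`, `B = φ(b²/2)`,
`⟨β η - β η₁, η - η₁⟩ = (aA - bB)(a - b) + A(ab - ⟨η, η₁⟩) + B(ab - ⟨η, η₁⟩)`,
where the first term is positive when `a ≠ b` and the others are nonnegative by Cauchy–Schwarz;
when `a = b` the expression is `A ‖η - η₁‖²`.
-/

open MeasureTheory RealInnerProductSpace

theorem StrictConvexOn.comp_mul_left {f : ℝ → ℝ} (hf : StrictConvexOn ℝ Set.univ f) {c : ℝ}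
    (hc : c ≠ 0) : StrictConvexOn ℝ Set.univ (fun x => f (c * x)) :=
  ⟨convex_univ, fun x _ y _ hxy a b ha hb hab => by
    simpa only [smul_eq_mul, mul_add, mul_left_comm c] using
      hf.2 (Set.mem_univ (c * x)) (Set.mem_univ (c * y)) ((mul_right_injective₀ hc).ne hxy)
        ha hb hab⟩

theorem StrictConvexOn.strictMonoOn_of_even {G g : ℝ → ℝ} (hG : StrictConvexOn ℝ Set.univ G)
    (heven : ∀ s, G (-s) = G s) (hg : ∀ s, 0 < s → HasDerivAt G (g s) s) (hg0 : g 0 = 0) :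
    StrictMonoOn g (Set.Ici 0) := by
  intro x hx y _ hxy
  rcases (Set.mem_Ici.1 hx).eq_or_lt with rfl | hx0
  · -- `G` is even, so its secant over `[-y, y]` is horizontal.
    calc g 0 = slope G (-y) y := by simp [slope_def_field, heven, hg0]
      _ < g y := hG.slope_lt_of_hasDerivAt trivial trivial (by linarith) (hg y hxy)
  · exact (hG.lt_slope_of_hasDerivAt trivial trivial hxy (hg x hx0)).trans
      (hG.slope_lt_of_hasDerivAt trivial trivial hxy (hg y (hx0.trans hxy)))

theorem hasDerivAt_integral_sq_div_two {φ : ℝ → ℝ} (hφ : ContinuousOn φ (Set.Ici 0)) {s : ℝ}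
    (hs : s ≠ 0) :
    HasDerivAt (fun s => ∫ τ in (0:ℝ)..s ^ 2 / 2, φ τ) (s * φ (s ^ 2 / 2)) s := by
  have hpos : 0 < s ^ 2 / 2 := by positivity
  have hFTC : HasDerivAt (fun u => ∫ τ in (0:ℝ)..u, φ τ) (φ (s ^ 2 / 2)) (s ^ 2 / 2) :=
    intervalIntegral.integral_hasDerivAt_right
      (hφ.mono (Set.uIcc_of_le hpos.le ▸ Set.Icc_subset_Ici_self)).intervalIntegrable
      ((hφ.mono Set.Ioi_subset_Ici_self).stronglyMeasurableAtFilter isOpen_Ioi _ hpos)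
      (hφ.continuousAt (Ici_mem_nhds hpos))
  have hsq : HasDerivAt (fun s : ℝ => s ^ 2 / 2) s s := by
    simpa using (hasDerivAt_pow 2 s).div_const 2
  rw [mul_comm]
  exact hFTC.comp s hsq

section Radial

variable {E : Type*} [NormedAddCommGroup E] [InnerProductSpace ℝ E] {f : ℝ → ℝ}

theorem mul_norm_mul_norm_sub_inner_nonneg (hf : ∀ r, 0 < r → 0 < f r) (x y : E) :
    0 ≤ f ‖x‖ * (‖x‖ * ‖y‖ - ⟪x, y⟫) := by
  rcases eq_or_ne x 0 with rfl | hx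
  · simp
  · exact mul_nonneg (hf _ (norm_pos_iff.2 hx)).le (sub_nonneg.2 (real_inner_le_norm x y))

theorem inner_smul_norm_sub_smul_norm_pos (hf : StrictMonoOn (fun r => r * f r) (Set.Ici 0))
    {x y : E} (hxy : x ≠ y) : 0 < ⟪f ‖x‖ • x - f ‖y‖ • y, x - y⟫ := by
  have hpos : ∀ r, 0 < r → 0 < f r := fun r hr =>
    pos_of_mul_pos_right (by simpa using hf Set.self_mem_Ici hr.le hr) hr.le
  rcases eq_or_ne ‖x‖ ‖y‖ with hnorm | hnorm
  · have hx : 0 < ‖x‖ := norm_pos_iff.2 fun hx0 => hxy <| by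
      rw [hx0, eq_comm, ← norm_eq_zero, ← hnorm, hx0, norm_zero]
    rw [hnorm, ← smul_sub, real_inner_smul_left, real_inner_self_eq_norm_sq, ← hnorm]
    exact mul_pos (hpos _ hx) (pow_pos (norm_sub_pos_iff.2 hxy) 2)
  · have hexp : ⟪f ‖x‖ • x - f ‖y‖ • y, x - y⟫ =
        (‖x‖ * f ‖x‖ - ‖y‖ * f ‖y‖) * (‖x‖ - ‖y‖) + f ‖x‖ * (‖x‖ * ‖y‖ - ⟪x, y⟫) +
          f ‖y‖ * (‖y‖ * ‖x‖ - ⟪y, x⟫) := by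
      simp only [inner_sub_left, inner_sub_right, real_inner_smul_left,
        real_inner_self_eq_norm_sq, real_inner_comm x y]
      ring
    have hmono : 0 < (‖x‖ * f ‖x‖ - ‖y‖ * f ‖y‖) * (‖x‖ - ‖y‖) := by
      rcases hnorm.lt_or_gt with h | h
      · exact mul_pos_of_neg_of_neg (sub_neg.2 (hf (norm_nonneg x) (norm_nonneg y) h))
          (sub_neg.2 h)
      · exact mul_pos (sub_pos.2 (hf (norm_nonneg y) (norm_nonneg x) h)) (sub_pos.2 h)
    rw [hexp]
    linarith [mul_norm_mul_norm_sub_inner_nonneg hpos x y,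
      mul_norm_mul_norm_sub_inner_nonneg hpos y x]

end Radial

theorem stmt1_general (N : ℕ) (φ : ℝ → ℝ)
    (hcont : ContinuousOn φ (Set.Ici 0))
    (Φ : ℝ → ℝ) (hΦ : ∀ s, Φ s = ∫ τ in (0:ℝ)..s, φ τ)
    (hconv : StrictConvexOn ℝ Set.univ (fun s : ℝ => Φ (s ^ 2)))
    (β : EuclideanSpace ℝ (Fin (N + 1)) → EuclideanSpace ℝ (Fin (N + 1)))
    (hβ : ∀ η, β η = φ (‖η‖ ^ 2 / 2) • η) :
    ∀ η η₁ : EuclideanSpace ℝ (Fin (N + 1)), η ≠ η₁ →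
      0 < ⟪β η - β η₁, η - η₁⟫ := by
  obtain rfl : Φ = fun s => ∫ τ in (0:ℝ)..s, φ τ := funext hΦ
  have hconv' : StrictConvexOn ℝ Set.univ (fun s : ℝ => ∫ τ in (0:ℝ)..s ^ 2 / 2, φ τ) := by
    convert hconv.comp_mul_left (inv_ne_zero (Real.sqrt_ne_zero'.2 two_pos)) using 3 with s
    rw [mul_pow, inv_pow, Real.sq_sqrt zero_le_two, inv_mul_eq_div]
  have hmono : StrictMonoOn (fun r => r * φ (r ^ 2 / 2)) (Set.Ici 0) :=
    hconv'.strictMonoOn_of_even (by simp)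
      (fun s hs => hasDerivAt_integral_sq_div_two hcont hs.ne') (zero_mul _)
  intro η η₁ hne
  rw [hβ, hβ]
  exact inner_smul_norm_sub_smul_norm_pos (f := fun r => φ (r ^ 2 / 2)) hmono hne

theorem stmt1 (N : ℕ) (φ : ℝ → ℝ) (φmin φmax : ℝ)
    (hcont : ContinuousOn φ (Set.Ici 0))
    (hmin : 0 < φmin)
    (hbd : ∀ s : ℝ, 0 ≤ s → φmin ≤ φ s ∧ φ s ≤ φmax)
    (Φ : ℝ → ℝ) (hΦ : ∀ s, Φ s = ∫ τ in (0:ℝ)..s, φ τ)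
    (hconv : StrictConvexOn ℝ Set.univ (fun s : ℝ => Φ (s ^ 2)))
    (β : EuclideanSpace ℝ (Fin (N + 1)) → EuclideanSpace ℝ (Fin (N + 1)))
    (hβ : ∀ η, β η = φ (‖η‖ ^ 2 / 2) • η) :
    ∀ η η₁ : EuclideanSpace ℝ (Fin (N + 1)), η ≠ η₁ →
      0 < ⟪β η - β η₁, η - η₁⟫ :=
  stmt1_general N φ hcont Φ hΦ hconv β hβ
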